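/- arXiv:1203.1381 — 2 statements merged into one kernel-verified Lean document; each statement's English description precedes it below -/
import Mathlib

section
/- Let H be a real Hilbert space, a : H × H → ℝ a coercive continuous symmetric bilinear form with induced norm ⦀·⦀, and let m, m₁ : H × H → ℝ be bilinear forms with m(v,v) ≥ 0 and m₁(v,v) ≥ 0 for all v. Let V ⊆ H be a subspace and suppose ẑ₁, ẑ₁¹ ∈ V satisfy a(ẑ₁,v) + m(ẑ₁,v) = g(v) and a(ẑ₁¹,v) + m₁(ẑ₁¹,v) = g(v) for all v ∈ V, where g is a fixed linear functional. If ⟨(m - m₁)ẑ₁, v⟩ ≤ Θ K_Z ‖u - u₁‖_{L₂}‖v‖_{L₂} for all v ∈ V, ‖v‖_{L₂} ≤ Ĉ h^s ⦀v⦀ for v ∈ V, and ‖u - u₁‖_{L₂} ≤ C h^s ⦀u - u₁⦀, then ⦀ẑ₁ - ẑ₁¹⦀ ≤ Θ K_Z C Ĉ h^{2s} ⦀u - u₁⦀. -/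
/-- Lemma 5.7 (DPErr), abstract Hilbert-space form: `ẑ₁` solves the discrete
limiting dual problem with nonnegative form `m` (from `b'(u)`), `ẑ₁¹` solves the
discrete approximate dual problem with nonnegative form `m₁` (from `b'(u₁)`),
both with the same right-hand side `g` on the subspace `V`, where the energy
inner product is the Hilbert inner product.  If the difference of the forms
applied to `ẑ₁` is bounded by `Θ K_Z ‖u - u₁‖_{L₂} ‖v‖_{L₂}` and the `L₂`-lifting
estimates `N v ≤ Ĉ h^s ⦀v⦀` on `V` and `‖u - u₁‖_{L₂} ≤ C h^s ⦀u - u₁⦀` hold,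
then `⦀ẑ₁ - ẑ₁¹⦀ ≤ Θ K_Z C Ĉ h^{2s} ⦀u - u₁⦀`.  Here `Nu` denotes the real
number `‖u - u₁‖_{L₂}` and `Eu` the energy norm `⦀u - u₁⦀`. -/
theorem dual_discrete_difference_bound
    {H : Type*} [NormedAddCommGroup H] [InnerProductSpace ℝ H]
    (V : Submodule ℝ H) (m m₁ : H → H → ℝ) (g : H → ℝ) (N : H → ℝ)
    (z₁ z₁' : H) (hz₁ : z₁ ∈ V) (hz₁' : z₁' ∈ V)
    (Θ KZ C Chat h s Eu Nu : ℝ)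
    (hΘ : 0 ≤ Θ) (hKZ : 0 ≤ KZ) (hC : 0 ≤ C) (hChat : 0 ≤ Chat)
    (hh : 0 < h) (hEu : 0 ≤ Eu) (hNu : 0 ≤ Nu)
    (hm₁lin : ∀ w w' v : H, m₁ (w - w') v = m₁ w v - m₁ w' v)
    (hm₁pos : ∀ v : H, 0 ≤ m₁ v v)
    (heq1 : ∀ v ∈ V, (inner ℝ z₁ v : ℝ) + m z₁ v = g v)
    (heq2 : ∀ v ∈ V, (inner ℝ z₁' v : ℝ) + m₁ z₁' v = g v)
    (hdiff : ∀ v ∈ V, |m z₁ v - m₁ z₁ v| ≤ Θ * KZ * Nu * N v)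
    (hliftV : ∀ v ∈ V, N v ≤ Chat * Real.rpow h s * ‖v‖)
    (hliftU : Nu ≤ C * Real.rpow h s * Eu) :
    ‖z₁ - z₁'‖ ≤ Θ * KZ * C * Chat * Real.rpow h (2 * s) * Eu := by
  set e := z₁ - z₁' with he
  have heV : e ∈ V := V.sub_mem hz₁ hz₁'
  have key : ‖e‖^2 + m₁ e e = m₁ z₁ e - m z₁ e := by
    have h1 := heq1 e heV
    have h2 := heq2 e heV
    have hlin := hm₁lin z₁ z₁' e
    have hinner : (inner ℝ e e : ℝ) = ‖e‖^2 := real_inner_self_eq_norm_sq e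
    have hsub : (inner ℝ e e : ℝ) = (inner ℝ z₁ e : ℝ) - (inner ℝ z₁' e : ℝ) := by
      rw [he, inner_sub_left]
    rw [← he] at hlin
    linarith
  have hNu' : 0 ≤ Θ * KZ * Nu := by positivity
  have hstep : ‖e‖^2 ≤ Θ * KZ * Nu * (Chat * Real.rpow h s * ‖e‖) := by
    have h3 : m₁ z₁ e - m z₁ e ≤ |m z₁ e - m₁ z₁ e| := by
      rw [abs_sub_comm]; exact le_abs_self _
    have h4 := hdiff e heV
    have h5 := hliftV e heV
    have h6 := mul_le_mul_of_nonneg_left h5 hNu'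
    have h7 := hm₁pos e
    linarith
  have hrpow : Real.rpow h (2 * s) = Real.rpow h s * Real.rpow h s := by
    rw [two_mul]; exact Real.rpow_add hh s s
  have hbound : ‖e‖^2 ≤ (Θ * KZ * C * Chat * Real.rpow h (2 * s) * Eu) * ‖e‖ := by
    have hr : 0 ≤ Real.rpow h s := Real.rpow_nonneg hh.le s
    have hc : 0 ≤ Θ * KZ * (Chat * Real.rpow h s * ‖e‖) :=
      mul_nonneg (mul_nonneg hΘ hKZ) (mul_nonneg (mul_nonneg hChat hr) (norm_nonneg e))
    have h8 := mul_le_mul_of_nonneg_left hliftU hc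
    rw [hrpow]; nlinarith
  rcases eq_or_lt_of_le (norm_nonneg e) with h0 | h0
  · rw [← h0]
    have hr2 : 0 ≤ Real.rpow h (2 * s) := Real.rpow_nonneg hh.le _
    exact mul_nonneg (mul_nonneg (mul_nonneg (mul_nonneg (mul_nonneg hΘ hKZ) hC) hChat) hr2) hEu
  · have := le_of_mul_le_mul_right (by nlinarith : ‖e‖ * ‖e‖ ≤ (Θ * KZ * C * Chat * Real.rpow h (2 * s) * Eu) * ‖e‖) h0
    linarith
end

section
/- Let H be a real Hilbert space with coercive symmetric bilinear form a and energy norm ⦀·⦀, and let b'(u) ≥ 0 define a nonnegative multiplication operator. Let ẑ ∈ H satisfy a(ẑ,v) + ⟨b'(u)ẑ,v⟩ = g(v) for all v ∈ H, and let u, u_j ∈ H with a(u - u_j, v) + ⟨b(u) - b(u_j), v⟩ = 0 for all v in a subspace V_j containing ẑ_j. Then g(u) - g(u_j) = a(u - u_j, ẑ - ẑ_j) + ⟨b(u) - b(u_j), ẑ - ẑ_j⟩ + ⟨(b'(u) - B_j)(u - u_j), ẑ⟩, where B_j = ∫₀¹ b'(u_j + ξ(u-u_j))dξ. -/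
/-- `β` stands for `b(u) - b(u_j) = B_j (u - u_j)`, `p` for `b'(u)(u - u_j)` and `q` for
`b'(u)ẑ`; the energy form `a` is the inner product of `H` and `c` is the `L₂` pairing. -/
theorem goal_error_representation
    {H : Type*} [NormedAddCommGroup H] [InnerProductSpace ℝ H]
    (Vj : Submodule ℝ H) (c : LinearMap.BilinForm ℝ H) (g : H →ₗ[ℝ] ℝ)
    (u uj z zj β p q : H) (hzj : zj ∈ Vj)
    (hdual : ∀ v : H, (inner ℝ z v : ℝ) + c q v = g v)
    (hGal : ∀ v ∈ Vj, (inner ℝ (u - uj) v : ℝ) + c β v = 0)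
    (hsym : c q (u - uj) = c p z) :
    g u - g uj = (inner ℝ (u - uj) (z - zj) : ℝ) + c β (z - zj) + c (p - β) z := by
  have hgal : (inner ℝ (u - uj) zj : ℝ) + c β zj = 0 := hGal zj hzj
  calc g u - g uj = g (u - uj) := (map_sub g u uj).symm
    _ = (inner ℝ (u - uj) z : ℝ) + c p z := by
      rw [← hdual, real_inner_comm (u - uj), hsym]
    _ = (inner ℝ (u - uj) (z - zj) : ℝ) + c β (z - zj) + c (p - β) z := by
      simp only [inner_sub_right, map_sub, LinearMap.sub_apply]
      linarith
end
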